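/- arXiv:1401.0641 — 5 statements merged into one kernel-verified Lean document; each statement's English description precedes it below -/
import Mathlib

section
/- Let b₂b₃ < 0, γ = √(−b₃/b₂), H > 0, and let θ : ℝ → ℝ be a twice differentiable solution of the pendulum equation θ'' = (b₁b₃/γ)·√(2H)·cos θ. Then x₁(t) = (γ/b₃)·θ'(t), x₂(t) = √(2H)·cos θ(t), x₃(t) = γ√(2H)·sin θ(t) is a solution of the Maxwell-Bloch top system ẋ₁ = b₁x₂, ẋ₂ = b₂x₁x₃, ẋ₃ = b₃x₁x₂, and it satisfies x₂(t)² − (b₂/b₃)·x₃(t)² = 2H for all t. -/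
/-! Everything is the chain rule applied to `cos θ` and `sin θ`. The one algebraic input is
`b₂ γ² = -b₃`, i.e. `b₂ γ² / b₃ = -1`: it turns the derivative of `x₂` into the right-hand side
`b₂ x₁ x₃`, and it turns the quadric `x₂² - (b₂/b₃) x₃²` into `2H (cos² θ + sin² θ)`. -/

open Real

theorem mul_sq_sqrt_neg_div {a b : ℝ} (h : a * b < 0) : a * √(-b / a) ^ 2 = -b := by
  have hba : b / a < 0 := by
    rw [div_neg_iff]
    rw [mul_neg_iff] at h
    tauto
  rw [sq_sqrt (by rw [neg_div]; exact neg_nonneg.mpr hba.le)]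
  field_simp [left_ne_zero_of_mul h.ne]

namespace MaxwellBlochTop

variable {b₁ b₂ b₃ γ r : ℝ} {θ θ' : ℝ → ℝ} {t : ℝ}

theorem hasDerivAt_fst (hb₃ : b₃ ≠ 0) (hγ : γ ≠ 0)
    (h : HasDerivAt θ' (b₁ * b₃ / γ * r * cos (θ t)) t) :
    HasDerivAt (fun s => γ / b₃ * θ' s) (b₁ * (r * cos (θ t))) t :=
  (h.const_mul (γ / b₃)).congr_deriv (by field_simp)

theorem hasDerivAt_snd (hγ : b₂ * γ ^ 2 = -b₃) (hb₃ : b₃ ≠ 0) (h : HasDerivAt θ (θ' t) t) :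
    HasDerivAt (fun s => r * cos (θ s))
      (b₂ * (γ / b₃ * θ' t) * (γ * r * sin (θ t))) t :=
  (((hasDerivAt_cos (θ t)).comp t h).const_mul r).congr_deriv (by
    field_simp
    linear_combination (-r * sin (θ t) * θ' t) * hγ)

theorem hasDerivAt_thd (hb₃ : b₃ ≠ 0) (h : HasDerivAt θ (θ' t) t) :
    HasDerivAt (fun s => γ * r * sin (θ s))
      (b₃ * (γ / b₃ * θ' t) * (r * cos (θ t))) t :=
  (((hasDerivAt_sin (θ t)).comp t h).const_mul (γ * r)).congr_deriv (by field_simp)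

theorem level_eq (hγ : b₂ * γ ^ 2 = -b₃) (hb₃ : b₃ ≠ 0) (x : ℝ) :
    (r * cos x) ^ 2 - b₂ / b₃ * (γ * r * sin x) ^ 2 = r ^ 2 := by
  field_simp
  linear_combination (-(r ^ 2 * sin x ^ 2)) * hγ + b₃ * r ^ 2 * sin_sq_add_cos_sq x

end MaxwellBlochTop

theorem maxwell_bloch_top_pendulum_solution_general (b₁ b₂ b₃ : ℝ)
    (hb₂₃ : b₂ * b₃ < 0)
    (γ : ℝ) (hγ : γ = Real.sqrt (-b₃ / b₂))
    (H : ℝ) (hH : 0 < H)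
    (θ θ' : ℝ → ℝ)
    (hθ : ∀ t, HasDerivAt θ (θ' t) t)
    (hθ' : ∀ t, HasDerivAt θ' (b₁ * b₃ / γ * Real.sqrt (2 * H) * Real.cos (θ t)) t) :
    (∀ t, HasDerivAt (fun s => γ / b₃ * θ' s)
        (b₁ * (Real.sqrt (2 * H) * Real.cos (θ t))) t) ∧
    (∀ t, HasDerivAt (fun s => Real.sqrt (2 * H) * Real.cos (θ s))
        (b₂ * (γ / b₃ * θ' t) * (γ * Real.sqrt (2 * H) * Real.sin (θ t))) t) ∧
    (∀ t, HasDerivAt (fun s => γ * Real.sqrt (2 * H) * Real.sin (θ s))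
        (b₃ * (γ / b₃ * θ' t) * (Real.sqrt (2 * H) * Real.cos (θ t))) t) ∧
    (∀ t, (Real.sqrt (2 * H) * Real.cos (θ t)) ^ 2
        - b₂ / b₃ * (γ * Real.sqrt (2 * H) * Real.sin (θ t)) ^ 2 = 2 * H) := by
  have hb₃ : b₃ ≠ 0 := right_ne_zero_of_mul hb₂₃.ne
  have hγsq : b₂ * γ ^ 2 = -b₃ := hγ ▸ mul_sq_sqrt_neg_div hb₂₃
  have hγ₀ : γ ≠ 0 := by
    rintro rfl
    exact hb₃ (by linarith)
  refine ⟨fun t => MaxwellBlochTop.hasDerivAt_fst hb₃ hγ₀ (hθ' t),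
    fun t => MaxwellBlochTop.hasDerivAt_snd hγsq hb₃ (hθ t),
    fun t => MaxwellBlochTop.hasDerivAt_thd hb₃ (hθ t), fun t => ?_⟩
  rw [MaxwellBlochTop.level_eq hγsq hb₃, sq_sqrt (by positivity)]

/-- If `θ` solves the pendulum equation `θ'' = (b₁b₃/γ)√(2H) cos θ` with
`γ = √(−b₃/b₂)`, then `(x₁,x₂,x₃) = ((γ/b₃)θ', √(2H)cos θ, γ√(2H)sin θ)` solves
the Maxwell-Bloch top system and lies on the level surface `x₂² − (b₂/b₃)x₃² = 2H`. -/
theorem maxwell_bloch_top_pendulum_solution (b₁ b₂ b₃ : ℝ)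
    (hb₁ : b₁ ≠ 0) (hb₂ : b₂ ≠ 0) (hb₃ : b₃ ≠ 0) (hb₂₃ : b₂ * b₃ < 0)
    (γ : ℝ) (hγ : γ = Real.sqrt (-b₃ / b₂))
    (H : ℝ) (hH : 0 < H)
    (θ θ' : ℝ → ℝ)
    (hθ : ∀ t, HasDerivAt θ (θ' t) t)
    (hθ' : ∀ t, HasDerivAt θ' (b₁ * b₃ / γ * Real.sqrt (2 * H) * Real.cos (θ t)) t) :
    (∀ t, HasDerivAt (fun s => γ / b₃ * θ' s)
        (b₁ * (Real.sqrt (2 * H) * Real.cos (θ t))) t) ∧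
    (∀ t, HasDerivAt (fun s => Real.sqrt (2 * H) * Real.cos (θ s))
        (b₂ * (γ / b₃ * θ' t) * (γ * Real.sqrt (2 * H) * Real.sin (θ t))) t) ∧
    (∀ t, HasDerivAt (fun s => γ * Real.sqrt (2 * H) * Real.sin (θ s))
        (b₃ * (γ / b₃ * θ' t) * (Real.sqrt (2 * H) * Real.cos (θ t))) t) ∧
    (∀ t, (Real.sqrt (2 * H) * Real.cos (θ t)) ^ 2
        - b₂ / b₃ * (γ * Real.sqrt (2 * H) * Real.sin (θ t)) ^ 2 = 2 * H) :=
  maxwell_bloch_top_pendulum_solution_general b₁ b₂ b₃ hb₂₃ γ hγ H hH θ θ' hθ hθ'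
end

section
/- Let P̄(x) be the skew-symmetric 3×3 matrix with P̄₁₂ = (b₁b₂/b₃)x₃, P̄₁₃ = b₁x₂, P̄₂₃ = 0, and H̄(x) = −(b₃/(2b₁))x₁² + x₃. Then P̄(x)·∇H̄(x) = (b₁x₂, b₂x₁x₃, b₃x₁x₂) for all x ∈ ℝ³, and moreover C̄(x) = (b₁/2)(x₂² − (b₂/b₃)x₃²) satisfies P̄(x)·∇C̄(x) = 0 for all x. -/
open Matrix

theorem hasFDerivAt_apply_sq {ι : Type*} [Fintype ι] (x : ι → ℝ) (i : ι) :
    HasFDerivAt (fun y : ι → ℝ => y i ^ 2)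
      ((2 * x i) • ContinuousLinearMap.proj (R := ℝ) (φ := fun _ : ι => ℝ) i) x := by
  simpa [pow_two, two_mul, add_smul] using
    (hasFDerivAt_apply i x).fun_mul (hasFDerivAt_apply i x)

section Partials

variable {ι : Type*} [DecidableEq ι]

noncomputable def partials (f : (ι → ℝ) → ℝ) (x : ι → ℝ) : ι → ℝ :=
  fun i => fderiv ℝ f x (Pi.single i 1)

theorem HasFDerivAt.partials_eq {f : (ι → ℝ) → ℝ} {L : (ι → ℝ) →L[ℝ] ℝ} {x : ι → ℝ}
    (h : HasFDerivAt f L x) : partials f x = fun i => L (Pi.single i 1) := by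
  unfold partials
  rw [h.fderiv]

end Partials

theorem partials_maxwellBloch_hamiltonian (c : ℝ) (x : Fin 3 → ℝ) :
    partials (fun x => -c * x 0 ^ 2 + x 2) x = ![-(2 * c * x 0), 0, 1] := by
  rw [(((hasFDerivAt_apply_sq x 0).const_mul (-c)).fun_add (hasFDerivAt_apply 2 x)).partials_eq]
  ext i
  fin_cases i <;> simp; ring

theorem partials_maxwellBloch_casimir (a d : ℝ) (x : Fin 3 → ℝ) :
    partials (fun x => a * (x 1 ^ 2 - d * x 2 ^ 2)) x = ![0, 2 * a * x 1, -(2 * a * d * x 2)] := by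
  rw [(((hasFDerivAt_apply_sq x 1).fun_sub
    ((hasFDerivAt_apply_sq x 2).const_mul d)).const_mul a).partials_eq]
  ext i
  fin_cases i <;> simp <;> ring

theorem maxwell_bloch_second_realization_general (b₁ b₂ b₃ : ℝ)
    (hb₁ : b₁ ≠ 0) (hb₃ : b₃ ≠ 0)
    (Hbar Cbar : (Fin 3 → ℝ) → ℝ)
    (hHbar : Hbar = fun x => -(b₃ / (2 * b₁)) * (x 0) ^ 2 + x 2)
    (hCbar : Cbar = fun x => b₁ / 2 * ((x 1) ^ 2 - b₂ / b₃ * (x 2) ^ 2))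
    (Pbar : (Fin 3 → ℝ) → Matrix (Fin 3) (Fin 3) ℝ)
    (hPbar : ∀ x, Pbar x = !![0, b₁ * b₂ / b₃ * x 2, b₁ * x 1;
      -(b₁ * b₂ / b₃ * x 2), 0, 0; -(b₁ * x 1), 0, 0]) :
    ∀ x : Fin 3 → ℝ,
      ((Pbar x) *ᵥ (fun i => (fderiv ℝ Hbar x) (Pi.single i 1)) =
        ![b₁ * x 1, b₂ * x 0 * x 2, b₃ * x 0 * x 1]) ∧
      ((Pbar x) *ᵥ (fun i => (fderiv ℝ Cbar x) (Pi.single i 1)) = 0) := by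
  intro x
  subst hHbar hCbar
  change Pbar x *ᵥ partials _ x = _ ∧ Pbar x *ᵥ partials _ x = 0
  rw [partials_maxwellBloch_hamiltonian, partials_maxwellBloch_casimir, hPbar]
  constructor <;> ext i <;> fin_cases i <;> simp [mulVec]
  · field_simp
  · field_simp
  · ring

/-- With `P̄(x)` the skew-symmetric matrix with `P̄₁₂ = (b₁b₂/b₃)x₃, P̄₁₃ = b₁x₂,
P̄₂₃ = 0`, and `H̄(x) = −(b₃/(2b₁))x₁² + x₃`, we have
`P̄(x)·∇H̄(x) = (b₁x₂, b₂x₁x₃, b₃x₁x₂)`; moreover `C̄(x) = (b₁/2)(x₂² − (b₂/b₃)x₃²)`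
satisfies `P̄(x)·∇C̄(x) = 0`. -/
theorem maxwell_bloch_second_realization (b₁ b₂ b₃ : ℝ)
    (hb₁ : b₁ ≠ 0) (hb₂ : b₂ ≠ 0) (hb₃ : b₃ ≠ 0)
    (Hbar Cbar : (Fin 3 → ℝ) → ℝ)
    (hHbar : Hbar = fun x => -(b₃ / (2 * b₁)) * (x 0) ^ 2 + x 2)
    (hCbar : Cbar = fun x => b₁ / 2 * ((x 1) ^ 2 - b₂ / b₃ * (x 2) ^ 2))
    (Pbar : (Fin 3 → ℝ) → Matrix (Fin 3) (Fin 3) ℝ)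
    (hPbar : ∀ x, Pbar x = !![0, b₁ * b₂ / b₃ * x 2, b₁ * x 1;
      -(b₁ * b₂ / b₃ * x 2), 0, 0; -(b₁ * x 1), 0, 0]) :
    ∀ x : Fin 3 → ℝ,
      ((Pbar x) *ᵥ (fun i => (fderiv ℝ Hbar x) (Pi.single i 1)) =
        ![b₁ * x 1, b₂ * x 0 * x 2, b₃ * x 0 * x 1]) ∧
      ((Pbar x) *ᵥ (fun i => (fderiv ℝ Cbar x) (Pi.single i 1)) = 0) :=
  maxwell_bloch_second_realization_general b₁ b₂ b₃ hb₁ hb₃ Hbar Cbar hHbar hCbar Pbar hPbar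
end

section
/- Assume b₂b₃ < 0 and m ≠ 0. Define L(x) = (1/2)·(−(b₃/(2b₁))x₁² + x₃ + (b₃/(2b₁))m²)² + (1/2)·(x₂² − (b₂/b₃)x₃²). Then L(m,0,0) = 0, L(x) > 0 for all x ≠ (m,0,0) and x ≠ (−m,0,0), and the derivative of L along the Maxwell-Bloch top vector field vanishes: ∇L(x)·(b₁x₂, b₂x₁x₃, b₃x₁x₂) = 0 for all x ∈ ℝ³. -/
open Matrix

/-!
With `c = b₃ / (2 b₁)` and `k = b₂ / b₃`, the function is
`L = ½ (-c x₀² + x₂ + c m²)² + ½ x₁² - ½ k x₂²`. Since `b₂ b₃ < 0` we have `k < 0`, so `L` is a sum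
of three squares with positive weights; it vanishes exactly when `x₁ = x₂ = 0` and `x₀² = m²`.
Along the field `(b₁ x₁, b₂ x₀ x₂, b₃ x₀ x₁)` the derivative of `L` is
`x₀ x₁ (A (b₃ - 2 c b₁) + x₂ (b₂ - k b₃))` with `A = -c x₀² + x₂ + c m²`, and both brackets vanish.
-/

theorem dotProduct_apply_single_eq_apply {ι R F : Type*} [Fintype ι] [DecidableEq ι]
    [CommSemiring R] [FunLike F (ι → R) R] [LinearMapClass F R (ι → R) R] (f : F) (v : ι → R) :
    (fun i => f (Pi.single i 1)) ⬝ᵥ v = f v := by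
  conv_rhs => rw [← Finset.univ_sum_single v]
  simp only [dotProduct, map_sum]
  refine Finset.sum_congr rfl fun i _ => ?_
  rw [mul_comm, ← smul_eq_mul, ← map_smul, ← Pi.single_smul', smul_eq_mul, mul_one]

namespace MaxwellBloch

def field (b₁ b₂ b₃ : ℝ) (x : Fin 3 → ℝ) : Fin 3 → ℝ :=
  ![b₁ * x 1, b₂ * x 0 * x 2, b₃ * x 0 * x 1]

noncomputable def lyap (c k m : ℝ) (x : Fin 3 → ℝ) : ℝ :=
  1 / 2 * (-c * x 0 ^ 2 + x 2 + c * m ^ 2) ^ 2 + 1 / 2 * (x 1 ^ 2 - k * x 2 ^ 2)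

variable {c k m : ℝ}

theorem lyap_equilibrium : lyap c k m ![m, 0, 0] = 0 := by
  simp [lyap]

theorem eq_equilibrium_of_lyap_nonpos (hc : c ≠ 0) (hk : k < 0) {x : Fin 3 → ℝ}
    (hx : lyap c k m x ≤ 0) : x = ![m, 0, 0] ∨ x = ![-m, 0, 0] := by
  set A := -c * x 0 ^ 2 + x 2 + c * m ^ 2
  have hx' : A ^ 2 + x 1 ^ 2 + (-k) * x 2 ^ 2 ≤ 0 := by unfold lyap at hx; linarith
  have hA0 : A = 0 := by nlinarith [sq_nonneg A, sq_nonneg (x 1), sq_nonneg (x 2)]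
  have hx₁ : x 1 = 0 := by nlinarith [sq_nonneg A, sq_nonneg (x 1), sq_nonneg (x 2)]
  have hx₂ : x 2 = 0 := by
    have : -k * x 2 ^ 2 = 0 := by nlinarith [sq_nonneg A, sq_nonneg (x 1), sq_nonneg (x 2)]
    exact pow_eq_zero_iff two_ne_zero |>.1 <| (mul_eq_zero.1 this).resolve_left (by linarith)
  have hx₀ : (x 0 - m) * (x 0 + m) = 0 := by
    have : c * ((x 0 - m) * (x 0 + m)) = 0 := by linear_combination -hA0 + hx₂
    exact (mul_eq_zero.1 this).resolve_left hc
  have hx_eq : ∀ a, x 0 = a → x = ![a, 0, 0] := fun a h => by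
    ext i; fin_cases i <;> simp [h, hx₁, hx₂]
  rcases mul_eq_zero.1 hx₀ with h | h
  · exact .inl (hx_eq m (by linarith))
  · exact .inr (hx_eq (-m) (by linarith))

theorem lyap_pos (hc : c ≠ 0) (hk : k < 0) {x : Fin 3 → ℝ} (hxm : x ≠ ![m, 0, 0])
    (hxm' : x ≠ ![-m, 0, 0]) : 0 < lyap c k m x := by
  by_contra! h
  rcases eq_equilibrium_of_lyap_nonpos hc hk h with h | h
  exacts [hxm h, hxm' h]

theorem fderiv_lyap_apply (x v : Fin 3 → ℝ) :
    fderiv ℝ (lyap c k m) x v = (-c * x 0 ^ 2 + x 2 + c * m ^ 2) * (-(2 * c) * x 0) * v 0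
      + x 1 * v 1 + (-c * x 0 ^ 2 + x 2 + c * m ^ 2 - k * x 2) * v 2 := by
  have h₀ := hasFDerivAt_apply (𝕜 := ℝ) 0 x
  have h₁ := hasFDerivAt_apply (𝕜 := ℝ) 1 x
  have h₂ := hasFDerivAt_apply (𝕜 := ℝ) 2 x
  have hA := (((h₀.pow 2).const_mul (-c)).add h₂).add_const (c * m ^ 2)
  have hL : HasFDerivAt (lyap c k m) _ x := ((hA.pow 2).const_mul (1 / 2)).add
    (((h₁.pow 2).sub ((h₂.pow 2).const_mul k)).const_mul (1 / 2))
  rw [hL.fderiv]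
  simp only [Pi.add_apply, _root_.add_apply, _root_.sub_apply,
    _root_.smul_apply, ContinuousLinearMap.proj_apply, smul_eq_mul, nsmul_eq_mul]
  ring

theorem fderiv_lyap_field {b₁ b₂ b₃ : ℝ} (hc : 2 * c * b₁ = b₃) (hk : k * b₃ = b₂)
    (x : Fin 3 → ℝ) : fderiv ℝ (lyap c k m) x (field b₁ b₂ b₃ x) = 0 := by
  rw [fderiv_lyap_apply]
  simp only [field, cons_val_zero, cons_val_one, cons_val]
  linear_combination -(x 0 * x 1 * (-c * x 0 ^ 2 + x 2 + c * m ^ 2)) * hc - x 0 * x 1 * x 2 * hk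

end MaxwellBloch

theorem maxwell_bloch_lyapunov_e1_general (b₁ b₂ b₃ m : ℝ)
    (hb₁ : b₁ ≠ 0) (hb₂₃ : b₂ * b₃ < 0)
    (L : (Fin 3 → ℝ) → ℝ)
    (hL : L = fun x => 1 / 2 * (-(b₃ / (2 * b₁)) * (x 0) ^ 2 + x 2
        + b₃ / (2 * b₁) * m ^ 2) ^ 2
      + 1 / 2 * ((x 1) ^ 2 - b₂ / b₃ * (x 2) ^ 2)) :
    L ![m, 0, 0] = 0 ∧
    (∀ x : Fin 3 → ℝ, x ≠ ![m, 0, 0] → x ≠ ![-m, 0, 0] → 0 < L x) ∧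
    (∀ x : Fin 3 → ℝ,
      (fun i => (fderiv ℝ L x) (Pi.single i 1)) ⬝ᵥ
        ![b₁ * x 1, b₂ * x 0 * x 2, b₃ * x 0 * x 1] = 0) := by
  have hb₃ : b₃ ≠ 0 := right_ne_zero_of_mul hb₂₃.ne
  have hL' : L = MaxwellBloch.lyap (b₃ / (2 * b₁)) (b₂ / b₃) m := hL
  have hc : b₃ / (2 * b₁) ≠ 0 := div_ne_zero hb₃ (mul_ne_zero two_ne_zero hb₁)
  have hk : b₂ / b₃ < 0 := by
    refine neg_of_mul_neg_left (b := b₃ ^ 2) ?_ (sq_nonneg b₃)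
    rwa [show b₂ / b₃ * b₃ ^ 2 = b₂ * b₃ by field_simp]
  subst hL'
  refine ⟨MaxwellBloch.lyap_equilibrium, fun x => MaxwellBloch.lyap_pos hc hk, fun x => ?_⟩
  rw [dotProduct_apply_single_eq_apply]
  exact MaxwellBloch.fderiv_lyap_field (by field_simp) (by field_simp) x

/-- Lyapunov function for the equilibrium `(m,0,0)` of the Maxwell-Bloch top system
when `b₂b₃ < 0`: `L(m,0,0) = 0`, `L > 0` away from `(±m,0,0)`, and the derivative of
`L` along the Maxwell-Bloch top vector field vanishes. -/
theorem maxwell_bloch_lyapunov_e1 (b₁ b₂ b₃ m : ℝ)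
    (hb₁ : b₁ ≠ 0) (hb₂ : b₂ ≠ 0) (hb₃ : b₃ ≠ 0) (hb₂₃ : b₂ * b₃ < 0) (hm : m ≠ 0)
    (L : (Fin 3 → ℝ) → ℝ)
    (hL : L = fun x => 1 / 2 * (-(b₃ / (2 * b₁)) * (x 0) ^ 2 + x 2
        + b₃ / (2 * b₁) * m ^ 2) ^ 2
      + 1 / 2 * ((x 1) ^ 2 - b₂ / b₃ * (x 2) ^ 2)) :
    L ![m, 0, 0] = 0 ∧
    (∀ x : Fin 3 → ℝ, x ≠ ![m, 0, 0] → x ≠ ![-m, 0, 0] → 0 < L x) ∧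
    (∀ x : Fin 3 → ℝ,
      (fun i => (fderiv ℝ L x) (Pi.single i 1)) ⬝ᵥ
        ![b₁ * x 1, b₂ * x 0 * x 2, b₃ * x 0 * x 1] = 0) :=
  maxwell_bloch_lyapunov_e1_general b₁ b₂ b₃ m hb₁ hb₂₃ L hL
end

section
/- Let c₁, c₂ > 0 and k ∈ ℝ, and let z : ℝ → ℝ³ be a differentiable solution of ż₁ = (1/c₂)z₂z₃, ż₂ = −(1/c₁)z₁z₃, ż₃ = −(k/c₁)z₁. Then both functions H̃(t) = −(k/(2c₁))·(z₁(t)² + (c₁/c₂)z₂(t)²) and C̃(t) = z₂(t) − (1/(2k))·z₃(t)² (the latter assuming k ≠ 0) are constant along the solution. -/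
theorem hasDerivAt_energy_eq_zero {c₁ c₂ k t : ℝ} {z₁ z₂ z₃ : ℝ → ℝ} (hc₁ : c₁ ≠ 0)
    (h₁ : HasDerivAt z₁ (1 / c₂ * z₂ t * z₃ t) t)
    (h₂ : HasDerivAt z₂ (-(1 / c₁) * z₁ t * z₃ t) t) :
    HasDerivAt (fun t => -(k / (2 * c₁)) * ((z₁ t) ^ 2 + c₁ / c₂ * (z₂ t) ^ 2)) 0 t := by
  refine (((h₁.fun_pow 2).fun_add ((h₂.fun_pow 2).const_mul (c₁ / c₂))).const_mul
    (-(k / (2 * c₁)))).congr_deriv ?_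
  field_simp
  ring

theorem hasDerivAt_casimir_eq_zero {c₁ k t : ℝ} {z₁ z₂ z₃ : ℝ → ℝ} (hk : k ≠ 0)
    (h₂ : HasDerivAt z₂ (-(1 / c₁) * z₁ t * z₃ t) t)
    (h₃ : HasDerivAt z₃ (-(k / c₁) * z₁ t) t) :
    HasDerivAt (fun t => z₂ t - 1 / (2 * k) * (z₃ t) ^ 2) 0 t := by
  refine (h₂.fun_sub ((h₃.fun_pow 2).const_mul (1 / (2 * k)))).congr_deriv ?_
  field_simp
  ring

theorem control_system_first_integrals_general (c₁ c₂ k : ℝ)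
    (hc₁ : 0 < c₁)
    (z₁ z₂ z₃ : ℝ → ℝ)
    (h₁ : ∀ t, HasDerivAt z₁ (1 / c₂ * z₂ t * z₃ t) t)
    (h₂ : ∀ t, HasDerivAt z₂ (-(1 / c₁) * z₁ t * z₃ t) t)
    (h₃ : ∀ t, HasDerivAt z₃ (-(k / c₁) * z₁ t) t) :
    (∀ t, HasDerivAt
      (fun t => -(k / (2 * c₁)) * ((z₁ t) ^ 2 + c₁ / c₂ * (z₂ t) ^ 2)) 0 t) ∧
    (k ≠ 0 → ∀ t, HasDerivAt (fun t => z₂ t - 1 / (2 * k) * (z₃ t) ^ 2) 0 t) :=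
  ⟨fun t => hasDerivAt_energy_eq_zero hc₁.ne' (h₁ t) (h₂ t),
    fun hk t => hasDerivAt_casimir_eq_zero hk (h₂ t) (h₃ t)⟩

/-- For the reduced optimal control system `ż₁ = (1/c₂)z₂z₃, ż₂ = −(1/c₁)z₁z₃,
ż₃ = −(k/c₁)z₁`, both `H̃ = −(k/(2c₁))(z₁² + (c₁/c₂)z₂²)` and (for `k ≠ 0`)
`C̃ = z₂ − (1/(2k))z₃²` are constants of motion. -/
theorem control_system_first_integrals (c₁ c₂ k : ℝ)
    (hc₁ : 0 < c₁) (hc₂ : 0 < c₂)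
    (z₁ z₂ z₃ : ℝ → ℝ)
    (h₁ : ∀ t, HasDerivAt z₁ (1 / c₂ * z₂ t * z₃ t) t)
    (h₂ : ∀ t, HasDerivAt z₂ (-(1 / c₁) * z₁ t * z₃ t) t)
    (h₃ : ∀ t, HasDerivAt z₃ (-(k / c₁) * z₁ t) t) :
    (∀ t, HasDerivAt
      (fun t => -(k / (2 * c₁)) * ((z₁ t) ^ 2 + c₁ / c₂ * (z₂ t) ^ 2)) 0 t) ∧
    (k ≠ 0 → ∀ t, HasDerivAt (fun t => z₂ t - 1 / (2 * k) * (z₃ t) ^ 2) 0 t) :=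
  control_system_first_integrals_general c₁ c₂ k hc₁ z₁ z₂ z₃ h₁ h₂ h₃
end

section
/- Let c₁,c₂ > 0, k ∈ ℝ, H > 0, and let θ : ℝ → ℝ be a twice differentiable solution of θ'' = (k/c₁²)·√(c₁/c₂)·√(2H)·cos θ. Then z₁(t) = √(2H)·cos θ(t), z₂(t) = √(c₂/c₁)·√(2H)·sin θ(t), z₃(t) = −√(c₁c₂)·θ'(t) solves the system ż₁ = (1/c₂)z₂z₃, ż₂ = −(1/c₁)z₁z₃, ż₃ = −(k/c₁)z₁, and z₁(t)² + (c₁/c₂)z₂(t)² = 2H for all t. -/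
/-! Each equation of the system is the chain rule applied to `cos θ`, `sin θ` or `θ'`; the
constants match because `√(c₂/c₁) · c₁ = √(c₁c₂) = √(c₁/c₂) · c₂`. The level surface is
`cos² + sin² = 1` scaled by `2H`. -/

open Real

lemma sqrt_div_mul_eq_sqrt_mul {a : ℝ} (ha : 0 < a) (b : ℝ) : √(b / a) * a = √(a * b) := by
  rw [show a * b = a ^ 2 * (b / a) by field_simp, sqrt_mul (sq_nonneg a), sqrt_sq ha.le,
    mul_comm]

/-- If `θ` solves the pendulum equation `θ'' = (k/c₁²)√(c₁/c₂)√(2H) cos θ`, then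
`(z₁,z₂,z₃) = (√(2H)cos θ, √(c₂/c₁)√(2H)sin θ, −√(c₁c₂)θ')` solves the reduced
optimal control system and lies on the level surface `z₁² + (c₁/c₂)z₂² = 2H`. -/
theorem control_system_pendulum_solution (c₁ c₂ k H : ℝ)
    (hc₁ : 0 < c₁) (hc₂ : 0 < c₂) (hH : 0 < H)
    (θ θ' : ℝ → ℝ)
    (hθ : ∀ t, HasDerivAt θ (θ' t) t)
    (hθ' : ∀ t, HasDerivAt θ'
      (k / c₁ ^ 2 * Real.sqrt (c₁ / c₂) * Real.sqrt (2 * H) * Real.cos (θ t)) t) :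
    (∀ t, HasDerivAt (fun s => Real.sqrt (2 * H) * Real.cos (θ s))
      (1 / c₂ * (Real.sqrt (c₂ / c₁) * Real.sqrt (2 * H) * Real.sin (θ t))
        * (-(Real.sqrt (c₁ * c₂)) * θ' t)) t) ∧
    (∀ t, HasDerivAt (fun s => Real.sqrt (c₂ / c₁) * Real.sqrt (2 * H) * Real.sin (θ s))
      (-(1 / c₁) * (Real.sqrt (2 * H) * Real.cos (θ t))
        * (-(Real.sqrt (c₁ * c₂)) * θ' t)) t) ∧
    (∀ t, HasDerivAt (fun s => -(Real.sqrt (c₁ * c₂)) * θ' s)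
      (-(k / c₁) * (Real.sqrt (2 * H) * Real.cos (θ t))) t) ∧
    (∀ t, (Real.sqrt (2 * H) * Real.cos (θ t)) ^ 2
      + c₁ / c₂ * (Real.sqrt (c₂ / c₁) * Real.sqrt (2 * H) * Real.sin (θ t)) ^ 2
        = 2 * H) := by
  have hb₁ : √(c₂ / c₁) * c₁ = √(c₁ * c₂) := sqrt_div_mul_eq_sqrt_mul hc₁ c₂
  have hb₂ : √(c₁ / c₂) * c₂ = √(c₁ * c₂) := by
    rw [mul_comm c₁]; exact sqrt_div_mul_eq_sqrt_mul hc₂ c₁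
  have ha₁ : √(c₂ / c₁) ^ 2 = c₂ / c₁ := sq_sqrt (by positivity)
  have ha₂ : √(c₁ / c₂) ^ 2 = c₁ / c₂ := sq_sqrt (by positivity)
  have hs : √(2 * H) ^ 2 = 2 * H := sq_sqrt (by positivity)
  refine ⟨fun t => ?_, fun t => ?_, fun t => ?_, fun t => ?_⟩
  · refine ((hθ t).cos.const_mul _).congr_deriv ?_
    rw [← hb₁]
    field_simp
    rw [ha₁]
    field_simp
  · refine ((hθ t).sin.const_mul _).congr_deriv ?_
    rw [← hb₁]
    field_simp
  · refine ((hθ' t).const_mul _).congr_deriv ?_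
    rw [← hb₂]
    field_simp
    rw [ha₂]
    field_simp
  · rw [mul_pow, mul_pow, mul_pow, ha₁, hs]
    field_simp
    linear_combination sin_sq_add_cos_sq (θ t)
end
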